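/- arXiv:2302.02475 — 2 statements merged into one kernel-verified Lean document; each statement's English description precedes it below -/
import Mathlib

section
/- Let f be a non-negative measurable function on a measurable set E ⊂ ℝ^n of finite measure and let α ≥ 0. Define g(x) := f(x)·χ_{{x ∈ E : f(x) > α}}(x). Then for all t ∈ (0, |E|), g^*(t) = f^*(t)·χ_{{t : f^*(t) > α}}(t); that is, g^*(t) = f^*(t) if f^*(t) > α and g^*(t) = 0 if f^*(t) ≤ α. -/
/-!
Write `λ(a) = |{x ∈ E : |f x| > a}|`, so that `f^*(t) = inf {a > 0 : λ(a) ≤ t}`. By continuity of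
the measure from below `λ` is right-continuous, and together with its monotonicity this gives the
Galois-type equivalence `λ(a) ≤ t ↔ f^*(t) ≤ a` for `a ≥ 0`. For `a > 0` the level set of `g` at
height `a` is the level set of `f` at height `max α a`, hence
`g^*(t) = inf {a > 0 : f^*(t) ≤ max α a}`, which is `f^*(t)` if `α < f^*(t)` and `0` otherwise.
-/

open MeasureTheory Set

/-- Non-increasing rearrangement of `g` restricted to `E`. -/
noncomputable def rearrOn {α : Type*} [MeasureSpace α] (E : Set α) (g : α → ℝ) (t : ℝ) : ℝ :=
  sInf {a : ℝ | 0 < a ∧ volume {x ∈ E | a < |g x|} ≤ ENNReal.ofReal t}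

section Rearrangement

variable {X : Type*} [MeasureSpace X]

noncomputable def distribOn (E : Set X) (f : X → ℝ) (a : ℝ) : ENNReal :=
  volume {x ∈ E | a < |f x|}

theorem rearrOn_eq_sInf_distribOn (E : Set X) (f : X → ℝ) (t : ℝ) :
    rearrOn E f t = sInf {a : ℝ | 0 < a ∧ distribOn E f a ≤ ENNReal.ofReal t} :=
  rfl

theorem rearrOn_nonneg (E : Set X) (f : X → ℝ) (t : ℝ) : 0 ≤ rearrOn E f t :=
  Real.sInf_nonneg fun _ ha => ha.1.le

theorem distribOn_antitone (E : Set X) (f : X → ℝ) : Antitone (distribOn E f) :=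
  fun _ _ hab => measure_mono fun _ hx => ⟨hx.1, hab.trans_lt hx.2⟩

theorem distribOn_le_of_forall_lt {E : Set X} {f : X → ℝ} {a : ℝ} {T : ENNReal}
    (h : ∀ b, a < b → distribOn E f b ≤ T) : distribOn E f a ≤ T := by
  set s : ℕ → Set X := fun k => {x ∈ E | a + 1 / (k + 1) < |f x|}
  have hs_mono : Monotone s := fun i j hij x hx =>
    ⟨hx.1, lt_of_le_of_lt (by gcongr) hx.2⟩
  have hs_iUnion : ⋃ k, s k = {x ∈ E | a < |f x|} := by
    ext x
    simp only [s, mem_iUnion, mem_ofPred_eq]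
    constructor
    · rintro ⟨k, hxE, hx⟩
      exact ⟨hxE, lt_of_le_of_lt (le_add_of_nonneg_right Nat.one_div_pos_of_nat.le) hx⟩
    · rintro ⟨hxE, hx⟩
      obtain ⟨k, hk⟩ := exists_nat_one_div_lt (sub_pos.mpr hx)
      exact ⟨k, hxE, by linarith⟩
  rw [distribOn, ← hs_iUnion, hs_mono.measure_iUnion]
  exact iSup_le fun k => h _ (lt_add_of_pos_right a Nat.one_div_pos_of_nat)

theorem exists_distribOn_le {E : Set X} {f : X → ℝ} (hE : MeasurableSet E) (hf : Measurable f)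
    (hEfin : volume E ≠ ⊤) {T : ENNReal} (hT : 0 < T) : ∃ a, 0 < a ∧ distribOn E f a ≤ T := by
  have h_iInter : ⋂ k : ℕ, {x ∈ E | (k : ℝ) < |f x|} = ∅ :=
    eq_empty_of_forall_notMem fun x hx =>
      let ⟨k, hk⟩ := exists_nat_gt |f x|
      (mem_iInter.mp hx k).2.not_gt hk
  have h_anti : Antitone fun k : ℕ => {x ∈ E | (k : ℝ) < |f x|} :=
    fun i j hij x hx => ⟨hx.1, (Nat.cast_le.mpr hij).trans_lt hx.2⟩
  have h_iInf : ⨅ k : ℕ, distribOn E f k = 0 := by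
    rw [← measure_empty (μ := (volume : Measure X)), ← h_iInter]
    refine (h_anti.measure_iInter (fun k => ?_) ⟨0, ?_⟩).symm
    · exact (hE.inter (measurableSet_lt measurable_const hf.abs)).nullMeasurableSet
    · exact ne_top_of_le_ne_top hEfin (measure_mono (sep_subset _ _))
  obtain ⟨k, hk⟩ := iInf_lt_iff.mp (h_iInf ▸ hT)
  exact ⟨k + 1, by positivity, (distribOn_antitone E f (by simp)).trans hk.le⟩

theorem distribOn_le_iff_rearrOn_le {E : Set X} {f : X → ℝ} {t a : ℝ}
    (hne : ∃ b, 0 < b ∧ distribOn E f b ≤ ENNReal.ofReal t) (ha : 0 ≤ a) :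
    distribOn E f a ≤ ENNReal.ofReal t ↔ rearrOn E f t ≤ a := by
  have hbdd : BddBelow {b : ℝ | 0 < b ∧ distribOn E f b ≤ ENNReal.ofReal t} :=
    ⟨0, fun _ hb => hb.1.le⟩
  constructor
  · refine fun h => le_of_forall_gt_imp_ge_of_dense fun b hab => csInf_le hbdd ?_
    exact ⟨ha.trans_lt hab, (distribOn_antitone E f hab.le).trans h⟩
  · refine fun h => distribOn_le_of_forall_lt fun b hab => ?_
    obtain ⟨c, hc, hcb⟩ := exists_lt_of_csInf_lt hne (h.trans_lt hab)
    exact (distribOn_antitone E f hcb.le).trans hc.2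

theorem distribOn_indicator {E : Set X} {f : X → ℝ} (hf : ∀ x ∈ E, 0 ≤ f x) (α : ℝ) {a : ℝ}
    (ha : 0 < a) :
    distribOn E ({x ∈ E | α < f x}.indicator f) a = distribOn E f (max α a) := by
  refine congrArg volume (sep_ext_iff.mpr fun x hxE => ?_)
  by_cases hx : α < f x <;> simp [hxE, hx, ha.not_gt, abs_of_nonneg (hf x hxE)]

end Rearrangement

theorem sInf_setOf_pos_and_le_max {m : ℝ} (hm : 0 ≤ m) (α : ℝ) :
    sInf {a : ℝ | 0 < a ∧ m ≤ max α a} = if α < m then m else 0 := by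
  split_ifs with hαm
  · refine IsGLB.csInf_eq ⟨fun a ha => ?_, fun b hb => ?_⟩
      ⟨m + 1, by linarith, le_max_of_le_right (by linarith)⟩
    · exact (le_max_iff.mp ha.2).resolve_left hαm.not_ge
    · exact le_of_forall_gt_imp_ge_of_dense fun a hma =>
        hb ⟨hm.trans_lt hma, le_max_of_le_right hma.le⟩
  · have h_eq : {a : ℝ | 0 < a ∧ m ≤ max α a} = Ioi 0 :=
      ext fun a => and_iff_left (le_max_of_le_left (not_lt.mp hαm))
    rw [h_eq, csInf_Ioi]

theorem stmt_5_general {n : ℕ} (E : Set (Fin n → ℝ)) (hE : MeasurableSet E)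
    (hEfin : volume E < ⊤)
    (f : (Fin n → ℝ) → ℝ) (hfmeas : Measurable f) (hfnonneg : ∀ x ∈ E, 0 ≤ f x)
    (α : ℝ)
    (g : (Fin n → ℝ) → ℝ)
    (hg : g = fun x => Set.indicator {x ∈ E | α < f x} f x)
    (t : ℝ) (ht : t ∈ Ioo (0 : ℝ) (volume E).toReal) :
    rearrOn E g t = if α < rearrOn E f t then rearrOn E f t else 0 := by
  subst hg
  have hne := exists_distribOn_le hE hfmeas hEfin.ne (ENNReal.ofReal_pos.mpr ht.1)
  calc rearrOn E _ t = sInf {a : ℝ | 0 < a ∧ rearrOn E f t ≤ max α a} := by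
        rw [rearrOn_eq_sInf_distribOn]
        refine congrArg sInf (ext fun a => and_congr_right fun ha => ?_)
        rw [distribOn_indicator hfnonneg α ha,
          distribOn_le_iff_rearrOn_le hne (ha.le.trans (le_max_right α a))]
    _ = _ := sInf_setOf_pos_and_le_max (rearrOn_nonneg E f t) α

theorem stmt_5 {n : ℕ} (E : Set (Fin n → ℝ)) (hE : MeasurableSet E)
    (hEfin : volume E < ⊤)
    (f : (Fin n → ℝ) → ℝ) (hfmeas : Measurable f) (hfnonneg : ∀ x ∈ E, 0 ≤ f x)
    (α : ℝ) (hα : 0 ≤ α)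
    (g : (Fin n → ℝ) → ℝ)
    (hg : g = fun x => Set.indicator {x ∈ E | α < f x} f x)
    (t : ℝ) (ht : t ∈ Ioo (0 : ℝ) (volume E).toReal) :
    rearrOn E g t = if α < rearrOn E f t then rearrOn E f t else 0 :=
  stmt_5_general E hE hEfin f hfmeas hfnonneg α g hg t ht
end

section
/- Let Q ⊂ ℝ^n be a cube, p measurable with 1 < p_- ≤ p_+ < ∞, and λ, τ ∈ (0,1). Define F(x,y) := (τ^{p(y)} λ^{p(x)(p(y)-1)})^{1/(p(x)-p(y))} if p(x) > p(y) and F(x,y) := 0 otherwise. Then for almost all t, s ∈ (0,1), the iterated rearrangement satisfies (Fχ_{Q×Q})^*(t|Q|, s|Q|) = τ^{Ψ_{Q,p}(t,s)} λ^{Ψ_{Q,p'}(s,t)} when t + s < 1 (interpreted as 0 when (pχ_Q)^*(t|Q|) = (pχ_Q)^*((1-s)|Q|)), and equals 0 when t + s ≥ 1. -/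
/-!
Write `F (x, y) = powKernel λ τ (p x) (p y)`. For `q < r` the kernel is a positive multiple of
`exp (-A / (r - q))`, both as a function of `r` and of `q`, so it is continuous, nondecreasing in
`r` and nonincreasing in `q`. The decreasing rearrangement commutes with continuous nondecreasing
maps, `(φ ∘ g)^*(t) = φ (g^*(t))`, while for continuous nonincreasing `ψ` one gets
`(ψ ∘ g)^*(|Q| - u) = ψ (g^*(u))` at every continuity point `u` of the monotone function `g^*`,
that is, for all but countably many `u`. Rearranging in `x` and then in `y` therefore gives
`powKernel λ τ (p^*(t|Q|)) (p^*((1-s)|Q|))` for almost all `t, s`. This vanishes when `t + s ≥ 1`,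
since `p^*` is nonincreasing; otherwise, as `p' = p/(p-1)` decreases with `p`, the same reflection
gives `p'^*(s|Q|) = (p^*((1-s)|Q|))'` and `p'^*((1-t)|Q|) = (p^*(t|Q|))'`, which turns the
exponents of the kernel into `Ψ_{Q,p}(t,s)` and `Ψ_{Q,p'}(s,t)`.
-/

open MeasureTheory Set

/-- Iterated non-increasing rearrangement of a function of two variables restricted to `A × B`. -/
noncomputable def rearr2On {α β : Type*} [MeasureSpace α] [MeasureSpace β]
    (A : Set α) (B : Set β) (f : α × β → ℝ) (t s : ℝ) : ℝ :=
  rearrOn B (fun y => rearrOn A (fun x => f (x, y)) t) s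

/-- An open axis-parallel cube in `ℝⁿ`. -/
def cube (n : ℕ) (a : Fin n → ℝ) (h : ℝ) : Set (Fin n → ℝ) :=
  univ.pi fun i => Ioo (a i) (a i + h)

/-- The Hölder conjugate `t ↦ t/(t-1)`. -/
noncomputable def conjExp (t : ℝ) : ℝ := t / (t - 1)

/-- `Ψ_{Q,p}(t,s) = (pχ_Q)^*((1-s)|Q|) / ((pχ_Q)^*(t|Q|) - (pχ_Q)^*((1-s)|Q|))`. -/
noncomputable def Psi {n : ℕ} (Q : Set (Fin n → ℝ)) (p : (Fin n → ℝ) → ℝ)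
    (sz t s : ℝ) : ℝ :=
  rearrOn Q p ((1 - s) * sz) / (rearrOn Q p (t * sz) - rearrOn Q p ((1 - s) * sz))

open Filter Topology

lemma MonotoneOn.exists_lt_forall_lt {s : Set ℝ} {φ : ℝ → ℝ} {a β : ℝ}
    (hφ : MonotoneOn φ s) (hφc : ContinuousWithinAt φ s β) (hβ : β ∈ s) (ha : a < φ β) :
    ∃ b < β, ∀ r ∈ s, b < r → a < φ r := by
  obtain ⟨b, hb, hsub⟩ := exists_Ioc_subset_of_mem_nhds
    (eventually_nhdsWithin_iff.mp (hφc.eventually (lt_mem_nhds ha))) (exists_lt β)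
  refine ⟨b, hb, fun r hr hbr => ?_⟩
  rcases le_or_gt r β with hrβ | hβr
  · exact hsub ⟨hbr, hrβ⟩ hr
  · exact ha.trans_le (hφ hβ hr hβr.le)

lemma AntitoneOn.exists_gt_forall_lt {s : Set ℝ} {ψ : ℝ → ℝ} {a β : ℝ}
    (hψ : AntitoneOn ψ s) (hψc : ContinuousWithinAt ψ s β) (hβ : β ∈ s) (ha : a < ψ β) :
    ∃ b > β, ∀ r ∈ s, r < b → a < ψ r := by
  obtain ⟨b, hb, hsub⟩ := exists_Ico_subset_of_mem_nhds
    (eventually_nhdsWithin_iff.mp (hψc.eventually (lt_mem_nhds ha))) (exists_gt β)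
  refine ⟨b, hb, fun r hr hrb => ?_⟩
  rcases le_or_gt β r with hβr | hrβ
  · exact hsub ⟨hβr, hrb⟩ hr
  · exact ha.trans_le (hψ hr hβ hrβ.le)

lemma Antitone.ae_continuousAt_comp {f φ : ℝ → ℝ} (hf : Antitone f) (hφ : Function.Injective φ) :
    ∀ᵐ s, ContinuousAt f (φ s) :=
  ((hf.countable_not_continuousAt.preimage hφ).ae_notMem volume).mono fun _ hs => not_not.1 hs

section Rearrangement

variable {X : Type*} [MeasureSpace X] {E : Set X} {g : X → ℝ} {m M t V β b c : ℝ}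

lemma rearrOn_eq_sInf_of_nonneg (hg : ∀ x, 0 ≤ g x) (t : ℝ) :
    rearrOn E g t = sInf {a | 0 < a ∧ volume {x ∈ E | a < g x} ≤ ENNReal.ofReal t} := by
  simp only [rearrOn, abs_of_nonneg (hg _)]

lemma rearrOn_eq_of_forall (hg : ∀ x, 0 ≤ g x) (hβ : 0 ≤ β)
    (hgt : ∀ a, β < a → volume {x ∈ E | a < g x} ≤ ENNReal.ofReal t)
    (hlt : ∀ a, 0 < a → a < β → ENNReal.ofReal t < volume {x ∈ E | a < g x}) :
    rearrOn E g t = β := by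
  rw [rearrOn_eq_sInf_of_nonneg hg]
  refine csInf_eq_of_forall_ge_of_forall_gt_exists_lt
    ⟨β + 1, by linarith, hgt _ (by linarith)⟩ (fun a ha => ?_) fun w hw => ?_
  · by_contra! h
    exact (hlt a ha.1 h).not_ge ha.2
  · exact ⟨(β + w) / 2, ⟨by linarith, hgt _ (by linarith)⟩, by linarith⟩

lemma rearrOn_levels_bddBelow :
    BddBelow {a | 0 < a ∧ volume {x ∈ E | a < g x} ≤ ENNReal.ofReal t} :=
  ⟨0, fun _ ha => ha.1.le⟩

lemma mem_rearrOn_levels_of_le {a : ℝ} (ha : 0 < a) (hg : ∀ x, g x ≤ a) :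
    a ∈ {a | 0 < a ∧ volume {x ∈ E | a < g x} ≤ ENNReal.ofReal t} := by
  have hempty : {x ∈ E | a < g x} = ∅ := eq_empty_of_forall_notMem fun x hx => (hg x).not_gt hx.2
  simp [ha, hempty]

lemma rearrOn_antitone (hg : ∀ x, g x ∈ Icc m M) (hm : 0 ≤ m) : Antitone (rearrOn E g) := by
  intro t₁ t₂ ht
  have hg0 : ∀ x, 0 ≤ g x := fun x => hm.trans (hg x).1
  rw [rearrOn_eq_sInf_of_nonneg hg0, rearrOn_eq_sInf_of_nonneg hg0]
  exact csInf_le_csInf rearrOn_levels_bddBelow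
    ⟨_, mem_rearrOn_levels_of_le (lt_max_of_lt_right one_pos)
      fun x => (hg x).2.trans (le_max_left M 1)⟩
    fun a ha => ⟨ha.1, ha.2.trans (ENNReal.ofReal_le_ofReal ht)⟩

lemma rearrOn_mem_Icc (hg : ∀ x, g x ∈ Icc m M) (hm : 0 < m)
    (ht : ENNReal.ofReal t < volume E) : rearrOn E g t ∈ Icc m M := by
  obtain ⟨x₀, -⟩ := nonempty_of_measure_ne_zero (pos_of_gt ht).ne'
  have hM : 0 < M := hm.trans_le ((hg x₀).1.trans (hg x₀).2)
  rw [rearrOn_eq_sInf_of_nonneg fun x => hm.le.trans (hg x).1]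
  constructor
  · refine le_csInf ⟨M, mem_rearrOn_levels_of_le hM fun x => (hg x).2⟩ fun a ha => ?_
    by_contra! ham
    have hall : {x ∈ E | a < g x} = E :=
      sep_eq_self_iff_mem_true.mpr fun x _ => ham.trans_le (hg x).1
    obtain ⟨-, hle⟩ := ha
    rw [hall] at hle
    exact (hle.trans_lt ht).false
  · exact csInf_le rearrOn_levels_bddBelow (mem_rearrOn_levels_of_le hM fun x => (hg x).2)

lemma volume_rearrOn_lt_le (hg : ∀ x, g x ∈ Icc m M) (hm : 0 ≤ m) :
    volume {x ∈ E | rearrOn E g t < g x} ≤ ENNReal.ofReal t := by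
  rw [rearrOn_eq_sInf_of_nonneg fun x => hm.trans (hg x).1]
  set S := {a | 0 < a ∧ volume {x ∈ E | a < g x} ≤ ENNReal.ofReal t}
  obtain ⟨u, hu_anti, hu_lim, hu_mem⟩ := exists_seq_tendsto_sInf
    ⟨_, mem_rearrOn_levels_of_le (lt_max_of_lt_right one_pos)
      fun x => (hg x).2.trans (le_max_left M 1)⟩ (rearrOn_levels_bddBelow : BddBelow S)
  have hunion : {x ∈ E | sInf S < g x} = ⋃ n, {x ∈ E | u n < g x} := by
    ext x
    simp only [mem_ofPred_eq, mem_iUnion]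
    refine ⟨fun ⟨hx, hlt⟩ => ?_, fun ⟨n, hx, hlt⟩ => ⟨hx, ?_⟩⟩
    · obtain ⟨n, hn⟩ := (hu_lim.eventually (gt_mem_nhds hlt)).exists
      exact ⟨n, hx, hn⟩
    · exact (csInf_le rearrOn_levels_bddBelow (hu_mem n)).trans_lt hlt
  have hmono : Monotone fun n => {x ∈ E | u n < g x} :=
    fun i j hij x hx => ⟨hx.1, (hu_anti hij).trans_lt hx.2⟩
  rw [hunion, hmono.measure_iUnion]
  exact iSup_le fun n => (hu_mem n).2

lemma ofReal_lt_volume_of_lt_rearrOn (hg : ∀ x, m ≤ g x) (hm : 0 < m)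
    (ht : ENNReal.ofReal t < volume E) (hc : c < rearrOn E g t) :
    ENNReal.ofReal t < volume {x ∈ E | c < g x} := by
  rcases lt_or_ge c m with hcm | hmc
  · rwa [sep_eq_self_iff_mem_true.mpr fun x _ => hcm.trans_le (hg x)]
  · by_contra! h
    rw [rearrOn_eq_sInf_of_nonneg fun x => hm.le.trans (hg x)] at hc
    exact hc.not_ge (csInf_le rearrOn_levels_bddBelow ⟨hm.trans_le hmc, h⟩)

lemma volume_sep_not_eq (hvol : volume E = ENNReal.ofReal V) {P : X → Prop}
    (hP : MeasurableSet {x | P x}) :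
    volume {x ∈ E | ¬ P x} = ENNReal.ofReal V - volume {x ∈ E | P x} := by
  have hfin : volume {x ∈ E | P x} ≠ ⊤ :=
    ne_top_of_le_ne_top (hvol ▸ ENNReal.ofReal_ne_top) (measure_mono (sep_subset _ _))
  refine ENNReal.eq_sub_of_add_eq hfin ?_
  rw [add_comm, ← hvol]
  exact measure_inter_add_sdiff E hP

lemma volume_lt_rearrOn_le (hgm : Measurable g) (hvol : volume E = ENNReal.ofReal V)
    (hg : ∀ x, m ≤ g x) (hm : 0 < m) (ht : 0 ≤ t) (htV : t < V) :
    volume {x ∈ E | g x < rearrOn E g t} ≤ ENNReal.ofReal (V - t) := by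
  have htE : ENNReal.ofReal t < volume E := by
    rw [hvol]; exact (ENNReal.ofReal_lt_ofReal_iff (ht.trans_lt htV)).2 htV
  obtain ⟨u, hu_mono, hu_lt, hu_lim⟩ := exists_seq_strictMono_tendsto (rearrOn E g t)
  have hunion : {x ∈ E | g x < rearrOn E g t} = ⋃ n, {x ∈ E | g x ≤ u n} := by
    ext x
    simp only [mem_ofPred_eq, mem_iUnion]
    refine ⟨fun ⟨hx, hlt⟩ => ?_, fun ⟨n, hx, hle⟩ => ⟨hx, hle.trans_lt (hu_lt n)⟩⟩
    obtain ⟨n, hn⟩ := (hu_lim.eventually (lt_mem_nhds hlt)).exists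
    exact ⟨n, hx, hn.le⟩
  have hmono : Monotone fun n => {x ∈ E | g x ≤ u n} :=
    fun i j hij x hx => ⟨hx.1, hx.2.trans (hu_mono.monotone hij)⟩
  rw [hunion, hmono.measure_iUnion]
  refine iSup_le fun n => ?_
  have hcompl := volume_sep_not_eq hvol (P := fun x => u n < g x)
    (measurableSet_lt measurable_const hgm)
  simp only [not_lt] at hcompl
  rw [hcompl, ENNReal.ofReal_sub _ ht]
  exact tsub_le_tsub_left (ofReal_lt_volume_of_lt_rearrOn hg hm htE (hu_lt n)).le _

lemma ofReal_sub_lt_volume_lt (hgm : Measurable g) (hvol : volume E = ENNReal.ofReal V)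
    (hg : ∀ x, g x ∈ Icc m M) (hm : 0 ≤ m) (ht : 0 < t) (htV : t < V)
    (hcont : ContinuousAt (rearrOn E g) t) (hb : rearrOn E g t < b) :
    ENNReal.ofReal (V - t) < volume {x ∈ E | g x < b} := by
  obtain ⟨t', ht't, ht'b, ht'⟩ :=
    ((hcont.eventually (gt_mem_nhds hb)).and (lt_mem_nhds ht)).exists_lt
  have hcompl := volume_sep_not_eq hvol (P := fun x => rearrOn E g t' < g x)
    (measurableSet_lt measurable_const hgm)
  simp only [not_lt] at hcompl
  calc ENNReal.ofReal (V - t) < ENNReal.ofReal (V - t') :=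
        (ENNReal.ofReal_lt_ofReal_iff (by linarith)).2 (by linarith)
    _ = ENNReal.ofReal V - ENNReal.ofReal t' := ENNReal.ofReal_sub _ ht'.le
    _ ≤ volume {x ∈ E | g x ≤ rearrOn E g t'} :=
        hcompl ▸ tsub_le_tsub_left (volume_rearrOn_lt_le hg hm) _
    _ ≤ volume {x ∈ E | g x < b} := measure_mono fun x hx => ⟨hx.1, hx.2.trans_lt ht'b⟩

theorem rearrOn_comp_of_monotoneOn (hg : ∀ x, g x ∈ Icc m M) (hm : 0 < m)
    (ht : ENNReal.ofReal t < volume E) {φ : ℝ → ℝ} (hφ0 : ∀ r ∈ Icc m M, 0 ≤ φ r)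
    (hφ : MonotoneOn φ (Icc m M)) (hφc : ContinuousOn φ (Icc m M)) :
    rearrOn E (fun x => φ (g x)) t = φ (rearrOn E g t) := by
  have hβ := rearrOn_mem_Icc hg hm ht
  refine rearrOn_eq_of_forall (fun x => hφ0 _ (hg x)) (hφ0 _ hβ) (fun a ha => ?_)
    fun a _ ha => ?_
  · refine (measure_mono ?_).trans (volume_rearrOn_lt_le (E := E) hg hm.le)
    refine fun x hx => ⟨hx.1, ?_⟩
    by_contra! hle
    exact (hφ (hg x) hβ hle).not_gt (ha.trans hx.2)
  · obtain ⟨b, hb, hφb⟩ := hφ.exists_lt_forall_lt (hφc _ hβ) hβ ha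
    exact (ofReal_lt_volume_of_lt_rearrOn (fun x => (hg x).1) hm ht hb).trans_le
      (measure_mono fun x hx => ⟨hx.1, hφb _ (hg x) hx.2⟩)

theorem rearrOn_comp_of_antitoneOn (hgm : Measurable g) (hvol : volume E = ENNReal.ofReal V)
    (hg : ∀ x, g x ∈ Icc m M) (hm : 0 < m) (ht : 0 < t) (htV : t < V)
    (hcont : ContinuousAt (rearrOn E g) t) {ψ : ℝ → ℝ} (hψ0 : ∀ r ∈ Icc m M, 0 ≤ ψ r)
    (hψ : AntitoneOn ψ (Icc m M)) (hψc : ContinuousOn ψ (Icc m M)) :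
    rearrOn E (fun x => ψ (g x)) (V - t) = ψ (rearrOn E g t) := by
  have htE : ENNReal.ofReal t < volume E := by
    rw [hvol]; exact (ENNReal.ofReal_lt_ofReal_iff (ht.trans htV)).2 htV
  have hβ := rearrOn_mem_Icc hg hm htE
  refine rearrOn_eq_of_forall (fun x => hψ0 _ (hg x)) (hψ0 _ hβ) (fun a ha => ?_)
    fun a _ ha => ?_
  · refine (measure_mono ?_).trans
      (volume_lt_rearrOn_le hgm hvol (fun x => (hg x).1) hm ht.le htV)
    refine fun x hx => ⟨hx.1, ?_⟩
    by_contra! hle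
    exact (hψ hβ (hg x) hle).not_gt (ha.trans hx.2)
  · obtain ⟨b, hb, hψb⟩ := hψ.exists_gt_forall_lt (hψc _ hβ) hβ ha
    exact (ofReal_sub_lt_volume_lt hgm hvol hg hm.le ht htV hcont hb).trans_le
      (measure_mono fun x hx => ⟨hx.1, hψb _ (hg x) hx.2⟩)

end Rearrangement

noncomputable def powKernel (lam τ r q : ℝ) : ℝ :=
  if q < r then (τ ^ q * lam ^ (r * (q - 1))) ^ (1 / (r - q)) else 0

section PowKernel

open Real

variable {lam τ r q : ℝ}

lemma powKernel_of_le (h : r ≤ q) : powKernel lam τ r q = 0 := if_neg h.not_gt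

lemma powKernel_nonneg (hlam : 0 ≤ lam) (hτ : 0 ≤ τ) : 0 ≤ powKernel lam τ r q := by
  unfold powKernel
  split_ifs
  · positivity
  · exact le_rfl

lemma powKernel_of_lt (hlam : 0 < lam) (hτ : 0 < τ) (h : q < r) :
    powKernel lam τ r q = exp ((q * log τ + r * (q - 1) * log lam) / (r - q)) := by
  rw [powKernel, if_pos h, rpow_def_of_pos (by positivity), log_mul (by positivity)
    (by positivity), log_rpow hτ, log_rpow hlam]
  ring_nf

/-- For `q < r`, `powKernel λ τ r q = λ^(q-1) exp(-A_q/(r-q)) = (τ λ^r)⁻¹ exp(-A_r/(r-q))` with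
`A = kernelRate λ τ`. -/
noncomputable def kernelRate (lam τ q : ℝ) : ℝ := -(q * (log τ + (q - 1) * log lam))

lemma kernelRate_pos (hlam : lam ∈ Ioo (0 : ℝ) 1) (hτ : τ ∈ Ioo (0 : ℝ) 1) (hq : 1 ≤ q) :
    0 < kernelRate lam τ q := by
  have := mul_nonpos_of_nonneg_of_nonpos (sub_nonneg.2 hq) (log_nonpos hlam.1.le hlam.2.le)
  exact neg_pos.2 (mul_neg_of_pos_of_neg (by linarith) (by linarith [log_neg hτ.1 hτ.2]))

lemma powKernel_eq_left (hlam : lam ∈ Ioo (0 : ℝ) 1) (hτ : τ ∈ Ioo (0 : ℝ) 1) (hq : 1 ≤ q)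
    (r : ℝ) :
    powKernel lam τ r q =
      exp ((q - 1) * log lam) * expNegInvGlue ((r - q) / kernelRate lam τ q) := by
  have hA := kernelRate_pos hlam hτ hq
  rcases le_or_gt r q with hrq | hqr
  · rw [powKernel_of_le hrq, expNegInvGlue.zero_of_nonpos
      (div_nonpos_of_nonpos_of_nonneg (by linarith) hA.le), mul_zero]
  · rw [powKernel_of_lt hlam.1 hτ.1 hqr, expNegInvGlue, if_neg (not_le.2 (by positivity)),
      ← exp_add, kernelRate]
    congr 1
    field_simp
    ring

lemma powKernel_eq_right (hlam : lam ∈ Ioo (0 : ℝ) 1) (hτ : τ ∈ Ioo (0 : ℝ) 1) (hr : 1 ≤ r)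
    (q : ℝ) :
    powKernel lam τ r q =
      exp (-(log τ + r * log lam)) * expNegInvGlue ((r - q) / kernelRate lam τ r) := by
  have hA := kernelRate_pos hlam hτ hr
  rcases le_or_gt r q with hrq | hqr
  · rw [powKernel_of_le hrq, expNegInvGlue.zero_of_nonpos
      (div_nonpos_of_nonpos_of_nonneg (by linarith) hA.le), mul_zero]
  · rw [powKernel_of_lt hlam.1 hτ.1 hqr, expNegInvGlue, if_neg (not_le.2 (by positivity)),
      ← exp_add, kernelRate]
    congr 1
    field_simp
    ring

lemma monotone_powKernel_left (hlam : lam ∈ Ioo (0 : ℝ) 1) (hτ : τ ∈ Ioo (0 : ℝ) 1)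
    (hq : 1 ≤ q) : Monotone (powKernel lam τ · q) := by
  simp only [powKernel_eq_left hlam hτ hq]
  exact (expNegInvGlue.monotone.comp fun r₁ r₂ h => div_le_div_of_nonneg_right
    (sub_le_sub_right h q) (kernelRate_pos hlam hτ hq).le).const_mul (exp_pos _).le

lemma continuous_powKernel_left (hlam : lam ∈ Ioo (0 : ℝ) 1) (hτ : τ ∈ Ioo (0 : ℝ) 1)
    (hq : 1 ≤ q) : Continuous (powKernel lam τ · q) := by
  simp only [powKernel_eq_left hlam hτ hq]
  exact continuous_const.mul ((expNegInvGlue.contDiff (n := 0)).continuous.comp (by fun_prop))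

lemma antitone_powKernel_right (hlam : lam ∈ Ioo (0 : ℝ) 1) (hτ : τ ∈ Ioo (0 : ℝ) 1)
    (hr : 1 ≤ r) : Antitone (powKernel lam τ r) := by
  rw [funext (powKernel_eq_right hlam hτ hr)]
  exact (expNegInvGlue.monotone.comp_antitone fun q₁ q₂ h => div_le_div_of_nonneg_right
    (sub_le_sub_left h r) (kernelRate_pos hlam hτ hr).le).const_mul (exp_pos _).le

lemma continuous_powKernel_right (hlam : lam ∈ Ioo (0 : ℝ) 1) (hτ : τ ∈ Ioo (0 : ℝ) 1)
    (hr : 1 ≤ r) : Continuous (powKernel lam τ r) := by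
  rw [funext (powKernel_eq_right hlam hτ hr)]
  exact continuous_const.mul ((expNegInvGlue.contDiff (n := 0)).continuous.comp (by fun_prop))

end PowKernel

lemma conjExp_pos {x : ℝ} (hx : 1 < x) : 0 < conjExp x :=
  div_pos (by linarith) (by linarith)

lemma antitoneOn_conjExp : AntitoneOn conjExp (Ioi 1) := by
  intro x (hx : 1 < x) y (hy : 1 < y) hxy
  rw [conjExp, conjExp, div_le_div_iff₀ (by linarith) (by linarith)]
  nlinarith

lemma continuousOn_conjExp : ContinuousOn conjExp (Ioi 1) :=
  continuousOn_id.div (continuousOn_id.sub continuousOn_const)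
    fun x (hx : 1 < x) => (sub_pos.2 hx).ne'

lemma conjExp_div_sub_conjExp {r q : ℝ} (hq : 1 < q) (hqr : q < r) :
    conjExp r / (conjExp q - conjExp r) = r * (q - 1) / (r - q) := by
  have h1 : q - 1 ≠ 0 := by linarith
  have h2 : r - 1 ≠ 0 := by linarith
  have h3 : r - q ≠ 0 := by linarith
  have hdiff : conjExp q - conjExp r = (r - q) / ((q - 1) * (r - 1)) := by
    unfold conjExp
    field_simp
    ring
  rw [hdiff, conjExp]
  field_simp

open Real in
lemma powKernel_eq_rpow_conjExp {lam τ r q : ℝ} (hlam : 0 < lam) (hτ : 0 < τ) (hq : 1 < q)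
    (hqr : q < r) :
    powKernel lam τ r q = τ ^ (q / (r - q)) * lam ^ (conjExp r / (conjExp q - conjExp r)) := by
  rw [conjExp_div_sub_conjExp hq hqr, powKernel_of_lt hlam hτ hqr, rpow_def_of_pos hτ,
    rpow_def_of_pos hlam, ← exp_add]
  ring_nf

section Rearrangement

variable {X : Type*} [MeasureSpace X] {E : Set X} {g : X → ℝ} {m M t u V : ℝ}

theorem rearr2On_powKernel {lam τ : ℝ} (hlam : lam ∈ Ioo (0 : ℝ) 1) (hτ : τ ∈ Ioo (0 : ℝ) 1)
    (hgm : Measurable g) (hvol : volume E = ENNReal.ofReal V) (hg : ∀ x, g x ∈ Icc m M)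
    (hm : 1 ≤ m) (ht : ENNReal.ofReal t < volume E) (hu : 0 < u) (huV : u < V)
    (hcont : ContinuousAt (rearrOn E g) u) :
    rearr2On E E (fun z => powKernel lam τ (g z.1) (g z.2)) t (V - u) =
      powKernel lam τ (rearrOn E g t) (rearrOn E g u) := by
  have hm0 : 0 < m := by linarith
  have hnonneg : ∀ r q, 0 ≤ powKernel lam τ r q :=
    fun _ _ => powKernel_nonneg hlam.1.le hτ.1.le
  have hinner (y : X) : rearrOn E (fun x => powKernel lam τ (g x) (g y)) t =
      powKernel lam τ (rearrOn E g t) (g y) :=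
    rearrOn_comp_of_monotoneOn (φ := (powKernel lam τ · (g y))) hg hm0 ht
      (fun _ _ => hnonneg _ _)
      ((monotone_powKernel_left hlam hτ (hm.trans (hg y).1)).monotoneOn _)
      (continuous_powKernel_left hlam hτ (hm.trans (hg y).1)).continuousOn
  have hR : 1 ≤ rearrOn E g t := hm.trans (rearrOn_mem_Icc hg hm0 ht).1
  simp only [rearr2On, hinner]
  exact rearrOn_comp_of_antitoneOn (ψ := powKernel lam τ (rearrOn E g t)) hgm hvol hg hm0 hu
    huV hcont (fun _ _ => hnonneg _ _)
    ((antitone_powKernel_right hlam hτ hR).antitoneOn _)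
    (continuous_powKernel_right hlam hτ hR).continuousOn

theorem rearrOn_conjExp (hgm : Measurable g) (hvol : volume E = ENNReal.ofReal V)
    (hg : ∀ x, g x ∈ Icc m M) (hm : 1 < m) (hu : 0 < u) (huV : u < V)
    (hcont : ContinuousAt (rearrOn E g) u) :
    rearrOn E (fun x => conjExp (g x)) (V - u) = conjExp (rearrOn E g u) := by
  have hsub : Icc m M ⊆ Ioi 1 := fun r hr => hm.trans_le hr.1
  exact rearrOn_comp_of_antitoneOn hgm hvol hg (by linarith) hu huV hcont
    (fun r hr => (conjExp_pos (hsub hr)).le) (antitoneOn_conjExp.mono hsub)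
    (continuousOn_conjExp.mono hsub)

end Rearrangement

lemma volume_cube (n : ℕ) (a : Fin n → ℝ) {h : ℝ} (hh : 0 ≤ h) :
    volume (cube n a h) = ENNReal.ofReal (h ^ n) := by
  simp [cube, volume_pi_pi, Real.volume_Ioo, ENNReal.ofReal_pow hh]

theorem stmt_18 {n : ℕ} (p : (Fin n → ℝ) → ℝ) (hpmeas : Measurable p)
    (pm pp : ℝ) (hpm : 1 < pm) (hbounds : ∀ x, pm ≤ p x ∧ p x ≤ pp)
    (a0 : Fin n → ℝ) (h : ℝ) (hh : 0 < h)
    (lam τ : ℝ) (hlam : lam ∈ Ioo (0:ℝ) 1) (hτ : τ ∈ Ioo (0:ℝ) 1)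
    (F : (Fin n → ℝ) × (Fin n → ℝ) → ℝ)
    (hF : F = fun z => if p z.2 < p z.1 then
        (τ ^ (p z.2) * lam ^ (p z.1 * (p z.2 - 1))) ^ (1 / (p z.1 - p z.2))
      else 0) :
    ∀ᵐ t ∂(volume.restrict (Ioo (0:ℝ) 1)),
      ∀ᵐ s ∂(volume.restrict (Ioo (0:ℝ) 1)),
        (t + s < 1 →
          rearr2On (cube n a0 h) (cube n a0 h) F (t * h ^ n) (s * h ^ n) =
            if rearrOn (cube n a0 h) p (t * h ^ n) =
                rearrOn (cube n a0 h) p ((1 - s) * h ^ n) then 0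
            else τ ^ (Psi (cube n a0 h) p (h ^ n) t s) *
              lam ^ (Psi (cube n a0 h) (fun x => conjExp (p x)) (h ^ n) s t)) ∧
        (1 ≤ t + s →
          rearr2On (cube n a0 h) (cube n a0 h) F (t * h ^ n) (s * h ^ n) = 0) := by
  set Q := cube n a0 h
  set V := h ^ n
  have hV : 0 < V := pow_pos hh n
  have hvol : volume Q = ENNReal.ofReal V := volume_cube n a0 hh.le
  have hlt_vol {u : ℝ} (hu : u < V) : ENNReal.ofReal u < volume Q :=
    hvol ▸ (ENNReal.ofReal_lt_ofReal_iff hV).2 hu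
  have hg : ∀ x, p x ∈ Icc pm pp := hbounds
  have hanti : Antitone (rearrOn Q p) := rearrOn_antitone hg (by linarith)
  have hgood {φ : ℝ → ℝ} (hφ : Function.Injective φ) :
      ∀ᵐ s ∂(volume.restrict (Ioo (0:ℝ) 1)),
        s ∈ Ioo (0:ℝ) 1 ∧ ContinuousAt (rearrOn Q p) (φ s) :=
    (ae_restrict_mem measurableSet_Ioo).and (ae_restrict_of_ae (hanti.ae_continuousAt_comp hφ))
  filter_upwards [hgood (mul_left_injective₀ hV.ne')] with t ⟨⟨ht0, ht1⟩, htc⟩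
  filter_upwards [hgood ((mul_left_injective₀ hV.ne').comp (sub_right_injective (b := 1)))]
    with s ⟨⟨hs0, hs1⟩, (hsc : ContinuousAt (rearrOn Q p) ((1 - s) * V))⟩
  have hsV : s * V = V - (1 - s) * V := by ring
  have htV : (1 - t) * V = V - t * V := by ring
  have hF' : rearr2On Q Q F (t * V) (s * V) =
      powKernel lam τ (rearrOn Q p (t * V)) (rearrOn Q p ((1 - s) * V)) := by
    rw [hF, hsV]
    exact rearr2On_powKernel hlam hτ hpmeas hvol hg hpm.le (hlt_vol (by nlinarith))
      (by positivity) (by nlinarith) hsc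
  refine ⟨fun hts => ?_, fun hts => ?_⟩
  · rcases (hanti (by nlinarith : t * V ≤ (1 - s) * V)).eq_or_lt with hRS | hSR
    · rw [if_pos hRS.symm, hF', hRS, powKernel_of_le le_rfl]
    · have hS : pm ≤ rearrOn Q p ((1 - s) * V) :=
        (rearrOn_mem_Icc hg (by linarith) (hlt_vol (by nlinarith))).1
      rw [if_neg hSR.ne', hF', powKernel_eq_rpow_conjExp hlam.1 hτ.1 (by linarith) hSR, Psi, Psi,
        hsV, htV, rearrOn_conjExp hpmeas hvol hg hpm (by positivity) (by nlinarith) hsc,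
        rearrOn_conjExp hpmeas hvol hg hpm (by positivity) (by nlinarith) htc]
  · rw [hF']
    exact powKernel_of_le (hanti (by nlinarith))
end
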